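/- (Theorem, discrete measure, constancy.) Under the stated discrete paraorthogonality setup with fixed zero e^{iθ₀}, if W_j(t) = 0 for all t ∈ I and all j = 0,…,N, then φ_n′(t) = 0 for all t ∈ I; that is, the zero ζ(t) = e^{iφ_n(t)} does not move as t increases on I. -/

import Mathlib

/-!
Put `z_j = e^{iω_j}` and `w(x) = ∏_{l ≤ n-2} (2 sin ((φ_l - x)/2))² · 2 sin ((θ₀ - x)/2) ·
2 sin ((φ_n - x)/2)`. On the unit circle `P(z) · conj (z ∏_{l ≤ n-2} (z - e^{iφ_l}))` is a fixed
unimodular multiple of `w(x)`, so paraorthogonality gives `∑_j γ_j w(ω_j) = 0` for every `t`;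
replacing the factor `z - e^{iφ_k}` of the test polynomial by `z + e^{iφ_k}` multiplies the summand
by `i cot ((φ_k - x)/2)`, so also `∑_j γ_j w(ω_j) cot ((φ_k - ω_j)/2) = 0`.

Since `S = -∂ₓ log |w|`, the condition `W_j = 0` (where `s ≠ 0`) says `γ_j' = γ_j S(ω_j) ω_j'`,
which cancels every `ω_j'`-term in the derivative of `∑_j γ_j w(ω_j) ≡ 0`. The `φ_k'`-terms vanish
by the second family of identities, leaving `φ_n' · ∑_j γ_j w(ω_j) cot ((φ_n - ω_j)/2) = 0`. With
`Δ = (φ_n - θ₀)/2`, `-sin Δ` times this last sum equals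
`∑_j γ_j ∏_l (2 sin ((φ_l - ω_j)/2))² (2 sin ((θ₀ - ω_j)/2))² > 0`, hence `φ_n' = 0`.
-/

open Polynomial Complex ComplexConjugate Finset Filter Topology

/-- `|signedChord a x| = |e^{ia} - e^{ix}|`. -/
noncomputable def signedChord (a x : ℝ) : ℝ := 2 * Real.sin ((a - x) / 2)

theorem conj_exp_ofReal_mul_I (x : ℝ) : conj (exp (x * I)) = exp ((-x : ℝ) * I) := by
  rw [← exp_conj, map_mul, conj_ofReal, conj_I]; push_cast; ring_nf

theorem exp_mul_I_mul_conj (x : ℝ) : exp (x * I) * conj (exp (x * I)) = 1 := by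
  rw [mul_conj', norm_exp_ofReal_mul_I, ofReal_one, one_pow]

theorem exp_mul_I_sub_exp_mul_I (x a : ℝ) :
    exp (x * I) - exp (a * I) = -I * signedChord a x * exp (((x + a) / 2 : ℝ) * I) := by
  set u : ℝ := (x - a) / 2
  have hx : (x : ℂ) * I = u * I + ((x + a) / 2 : ℝ) * I := by push_cast [u]; ring
  have ha : (a : ℂ) * I = (-u : ℝ) * I + ((x + a) / 2 : ℝ) * I := by push_cast [u]; ring
  have hchord : signedChord a x = -2 * Real.sin u := by
    rw [signedChord, show (a - x) / 2 = -u by ring, Real.sin_neg]; ring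
  rw [hx, ha, exp_add, exp_add, ← sub_mul, exp_mul_I, exp_mul_I, ← ofReal_cos, ← ofReal_sin,
    ← ofReal_cos, ← ofReal_sin, Real.cos_neg, Real.sin_neg, hchord]
  push_cast
  ring

theorem exp_mul_I_add_exp_mul_I (x a : ℝ) :
    exp (x * I) + exp (a * I) = 2 * Real.cos ((a - x) / 2) * exp (((x + a) / 2 : ℝ) * I) := by
  set u : ℝ := (x - a) / 2
  have hx : (x : ℂ) * I = u * I + ((x + a) / 2 : ℝ) * I := by push_cast [u]; ring
  have ha : (a : ℂ) * I = (-u : ℝ) * I + ((x + a) / 2 : ℝ) * I := by push_cast [u]; ring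
  have hcos : Real.cos ((a - x) / 2) = Real.cos u := by
    rw [show (a - x) / 2 = -u by ring, Real.cos_neg]
  rw [hx, ha, exp_add, exp_add, ← add_mul, exp_mul_I, exp_mul_I, ← ofReal_cos, ← ofReal_sin,
    ← ofReal_cos, ← ofReal_sin, Real.cos_neg, Real.sin_neg, hcos]
  push_cast
  ring

theorem exp_mul_I_sub_mul_conj (x a : ℝ) :
    (exp (x * I) - exp (a * I)) * conj (exp (x * I) - exp (a * I)) =
      (signedChord a x ^ 2 : ℝ) := by
  have h := exp_mul_I_mul_conj ((x + a) / 2)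
  rw [exp_mul_I_sub_exp_mul_I, map_mul, map_mul, map_neg, conj_I, conj_ofReal, ofReal_pow]
  linear_combination (-(signedChord a x : ℂ) ^ 2 * I ^ 2) * h - (signedChord a x : ℂ) ^ 2 * I_sq

theorem signedChord_sq_mul_cot (a x : ℝ) :
    signedChord a x ^ 2 * Real.cot ((a - x) / 2) = 2 * Real.sin (a - x) := by
  have h2 : Real.sin (a - x) = 2 * Real.sin ((a - x) / 2) * Real.cos ((a - x) / 2) := by
    rw [← Real.sin_two_mul]; ring_nf
  rw [signedChord, Real.cot_eq_cos_div_sin, h2]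
  by_cases h : Real.sin ((a - x) / 2) = 0
  · simp [h]
  · field_simp

theorem exp_mul_I_sub_mul_conj_add (x a : ℝ) :
    (exp (x * I) - exp (a * I)) * conj (exp (x * I) + exp (a * I)) =
      -I * (signedChord a x ^ 2 * Real.cot ((a - x) / 2) : ℝ) := by
  have h := exp_mul_I_mul_conj ((x + a) / 2)
  have h2 : Real.sin (a - x) = 2 * Real.sin ((a - x) / 2) * Real.cos ((a - x) / 2) := by
    rw [← Real.sin_two_mul]; ring_nf
  rw [signedChord_sq_mul_cot, exp_mul_I_sub_exp_mul_I, exp_mul_I_add_exp_mul_I, map_mul, map_mul,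
    conj_ofReal, map_ofNat, h2, signedChord]
  simp only [ofReal_mul, ofReal_ofNat]
  linear_combination (-4 * I * Real.sin ((a - x) / 2) * Real.cos ((a - x) / 2) : ℂ) * h

theorem exp_mul_I_sub_mul_exp_mul_I_sub_mul_conj (x p q : ℝ) :
    (exp (x * I) - exp (p * I)) * (exp (x * I) - exp (q * I)) * conj (exp (x * I)) =
      -exp (((p + q) / 2 : ℝ) * I) * (signedChord p x * signedChord q x : ℝ) := by
  have hE : exp (((x + p) / 2 : ℝ) * I) * exp (((x + q) / 2 : ℝ) * I) * conj (exp (x * I)) =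
      exp (((p + q) / 2 : ℝ) * I) := by
    rw [conj_exp_ofReal_mul_I, ← exp_add, ← exp_add]; congr 1; push_cast; ring
  rw [exp_mul_I_sub_exp_mul_I, exp_mul_I_sub_exp_mul_I, ofReal_mul]
  linear_combination (-(signedChord p x : ℂ) * signedChord q x) * hE
    + ((signedChord p x : ℂ) * signedChord q x * exp (((x + p) / 2 : ℝ) * I) *
      exp (((x + q) / 2 : ℝ) * I) * conj (exp (x * I))) * I_sq

theorem sin_half_sub_ne_zero {a x : ℝ} (h : exp (a * I) ≠ exp (x * I)) :
    Real.sin ((a - x) / 2) ≠ 0 := by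
  intro hsin
  obtain ⟨k, hk⟩ := Real.sin_eq_zero_iff.mp hsin
  refine h (exp_eq_exp_iff_exists_int.mpr ⟨k, ?_⟩)
  have hax : a = x + k * (2 * Real.pi) := by linarith
  rw [hax]; push_cast; ring

variable {ι κ : Type*}

noncomputable def popucWeight (s : Finset ι) (φ : ι → ℝ) (θ₀ ψ x : ℝ) : ℝ :=
  (∏ l ∈ s, signedChord (φ l) x ^ 2) * (signedChord θ₀ x * signedChord ψ x)

/-- The function `S`; it equals `-∂ₓ log |popucWeight s φ θ₀ ψ x|`. -/
noncomputable def popucCotSum (s : Finset ι) (φ : ι → ℝ) (θ₀ ψ x : ℝ) : ℝ :=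
  (∑ l ∈ s, Real.cot ((φ l - x) / 2)) + (1 / 2) * Real.cot ((θ₀ - x) / 2) +
    (1 / 2) * Real.cot ((ψ - x) / 2)

/-- Paraorthogonality for `∑_{j ∈ J} γ_j δ_{ω_j}` of the polynomial whose zeros are `e^{iφ_l}`
(`l ∈ s`), the fixed zero `e^{iθ₀}` and the moving zero `e^{iψ}`. -/
def IsParaorthogonal (J : Finset κ) (γ ω : κ → ℝ) (s : Finset ι) (φ : ι → ℝ) (θ₀ ψ : ℝ) :
    Prop :=
  ∀ g : ℂ[X], g.natDegree ≤ #s + 1 → g.eval 0 = 0 →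
    ∑ j ∈ J, (γ j : ℂ) * ((∏ l ∈ s, (exp (ω j * I) - exp (φ l * I))) *
      (exp (ω j * I) - exp (θ₀ * I)) * (exp (ω j * I) - exp (ψ * I))) *
      conj (g.eval (exp (ω j * I))) = 0

section Summands

variable (s : Finset ι) (φ : ι → ℝ) (θ₀ ψ x : ℝ)

theorem summand_eq_popucWeight :
    (∏ l ∈ s, (exp (x * I) - exp (φ l * I))) * (exp (x * I) - exp (θ₀ * I)) *
      (exp (x * I) - exp (ψ * I)) *
      conj ((X * ∏ l ∈ s, (X - C (exp (φ l * I)))).eval (exp (x * I))) =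
    -exp (((θ₀ + ψ) / 2 : ℝ) * I) * popucWeight s φ θ₀ ψ x := by
  simp only [eval_mul, eval_X, eval_prod, eval_sub, eval_C, map_mul, map_prod]
  calc _ = (∏ l ∈ s, (exp (x * I) - exp (φ l * I)) * conj (exp (x * I) - exp (φ l * I))) *
        ((exp (x * I) - exp (θ₀ * I)) * (exp (x * I) - exp (ψ * I)) * conj (exp (x * I))) := by
        rw [prod_mul_distrib]; ring
    _ = _ := by
      simp only [exp_mul_I_sub_mul_conj, exp_mul_I_sub_mul_exp_mul_I_sub_mul_conj, popucWeight]
      push_cast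
      ring

theorem summand_eq_popucWeight_mul_cot [DecidableEq ι] {k : ι} (hk : k ∈ s) :
    (∏ l ∈ s, (exp (x * I) - exp (φ l * I))) * (exp (x * I) - exp (θ₀ * I)) *
      (exp (x * I) - exp (ψ * I)) *
      conj ((X * (X + C (exp (φ k * I))) * ∏ l ∈ s.erase k, (X - C (exp (φ l * I)))).eval
        (exp (x * I))) =
    I * exp (((θ₀ + ψ) / 2 : ℝ) * I) *
      (popucWeight s φ θ₀ ψ x * Real.cot ((φ k - x) / 2) : ℝ) := by
  simp only [eval_mul, eval_add, eval_X, eval_prod, eval_sub, eval_C, map_mul, map_prod]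
  rw [← mul_prod_erase s _ hk, popucWeight, ← mul_prod_erase s _ hk]
  calc _ = ((exp (x * I) - exp (φ k * I)) * conj (exp (x * I) + exp (φ k * I))) *
        (∏ l ∈ s.erase k, (exp (x * I) - exp (φ l * I)) * conj (exp (x * I) - exp (φ l * I))) *
        ((exp (x * I) - exp (θ₀ * I)) * (exp (x * I) - exp (ψ * I)) * conj (exp (x * I))) := by
        rw [prod_mul_distrib, map_add]; ring
    _ = _ := by
      simp only [exp_mul_I_sub_mul_conj, exp_mul_I_sub_mul_conj_add,
        exp_mul_I_sub_mul_exp_mul_I_sub_mul_conj]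
      push_cast
      ring

end Summands

theorem sum_mul_eq_zero_of_summand_eq {J : Finset κ} {γ r : κ → ℝ} {P G : κ → ℂ} {c : ℂ}
    (hc : c ≠ 0) (hPG : ∀ j, P j * G j = c * r j) (h : ∑ j ∈ J, (γ j : ℂ) * P j * G j = 0) :
    ∑ j ∈ J, γ j * r j = 0 := by
  simp only [mul_assoc, hPG, mul_left_comm _ c, ← mul_sum] at h
  exact_mod_cast (mul_eq_zero.mp h).resolve_left hc

namespace IsParaorthogonal

variable {J : Finset κ} {γ ω : κ → ℝ} {s : Finset ι} {φ : ι → ℝ} {θ₀ ψ : ℝ}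

theorem sum_mul_popucWeight_eq_zero (h : IsParaorthogonal J γ ω s φ θ₀ ψ) :
    ∑ j ∈ J, γ j * popucWeight s φ θ₀ ψ (ω j) = 0 := by
  refine sum_mul_eq_zero_of_summand_eq (neg_ne_zero.mpr (exp_ne_zero _))
    (fun j => summand_eq_popucWeight s φ θ₀ ψ (ω j)) (h _ ?_ (by simp))
  refine natDegree_mul_le.trans ?_
  rw [natDegree_X, natDegree_finsetProd_X_sub_C_eq_card, add_comm]

theorem sum_mul_popucWeight_mul_cot_eq_zero (h : IsParaorthogonal J γ ω s φ θ₀ ψ) {k : ι}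
    (hk : k ∈ s) :
    ∑ j ∈ J, γ j * (popucWeight s φ θ₀ ψ (ω j) * Real.cot ((φ k - ω j) / 2)) = 0 := by
  classical
  set g : ℂ[X] := X * (X + C (exp (φ k * I))) * ∏ l ∈ s.erase k, (X - C (exp (φ l * I)))
  have hg : g.natDegree ≤ #s + 1 := by
    have hs : 0 < #s := card_pos.mpr ⟨k, hk⟩
    refine natDegree_mul_le.trans ((add_le_add_left natDegree_mul_le _).trans ?_)
    rw [natDegree_X, natDegree_X_add_C, natDegree_finsetProd_X_sub_C_eq_card,
      card_erase_of_mem hk]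
    omega
  exact sum_mul_eq_zero_of_summand_eq (mul_ne_zero I_ne_zero (exp_ne_zero _))
    (fun j => summand_eq_popucWeight_mul_cot s φ θ₀ ψ (ω j) hk) (h g hg (by simp [g]))

end IsParaorthogonal

theorem prod_sq_mul_signedChord_sq_eq {s : Finset ι} {φ : ι → ℝ} {θ₀ ψ x : ℝ}
    (hψ : Real.sin ((ψ - x) / 2) ≠ 0) :
    (∏ l ∈ s, signedChord (φ l) x ^ 2) * signedChord θ₀ x ^ 2 =
      Real.cos ((ψ - θ₀) / 2) * popucWeight s φ θ₀ ψ x -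
        Real.sin ((ψ - θ₀) / 2) * (popucWeight s φ θ₀ ψ x * Real.cot ((ψ - x) / 2)) := by
  have hθ : Real.sin ((θ₀ - x) / 2) = Real.sin ((ψ - x) / 2) * Real.cos ((ψ - θ₀) / 2) -
      Real.cos ((ψ - x) / 2) * Real.sin ((ψ - θ₀) / 2) := by
    rw [← Real.sin_sub]; ring_nf
  rw [popucWeight, signedChord, signedChord, Real.cot_eq_cos_div_sin]
  field_simp
  rw [hθ]
  ring

theorem sum_mul_popucWeight_mul_cot_ne_zero {J : Finset κ} {γ ω : κ → ℝ} {s : Finset ι}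
    {φ : ι → ℝ} {θ₀ ψ : ℝ} (hJ : J.Nonempty) (hγ : ∀ j ∈ J, 0 < γ j)
    (hφ : ∀ j ∈ J, ∀ l ∈ s, Real.sin ((φ l - ω j) / 2) ≠ 0)
    (hθ₀ : ∀ j ∈ J, Real.sin ((θ₀ - ω j) / 2) ≠ 0) (hψ : ∀ j ∈ J, Real.sin ((ψ - ω j) / 2) ≠ 0)
    (h : ∑ j ∈ J, γ j * popucWeight s φ θ₀ ψ (ω j) = 0) :
    ∑ j ∈ J, γ j * (popucWeight s φ θ₀ ψ (ω j) * Real.cot ((ψ - ω j) / 2)) ≠ 0 := by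
  intro hcot
  have hpos : 0 < ∑ j ∈ J, γ j * ((∏ l ∈ s, signedChord (φ l) (ω j) ^ 2) *
      signedChord θ₀ (ω j) ^ 2) := by
    refine sum_pos (fun j hj => mul_pos (hγ j hj) (mul_pos (prod_pos fun l hl => ?_) ?_)) hJ
    · exact sq_pos_of_ne_zero (mul_ne_zero two_ne_zero (hφ j hj l hl))
    · exact sq_pos_of_ne_zero (mul_ne_zero two_ne_zero (hθ₀ j hj))
  have hzero : ∑ j ∈ J, γ j * ((∏ l ∈ s, signedChord (φ l) (ω j) ^ 2) *
      signedChord θ₀ (ω j) ^ 2) = 0 := by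
    calc _ = ∑ j ∈ J, (Real.cos ((ψ - θ₀) / 2) * (γ j * popucWeight s φ θ₀ ψ (ω j)) -
          Real.sin ((ψ - θ₀) / 2) *
            (γ j * (popucWeight s φ θ₀ ψ (ω j) * Real.cot ((ψ - ω j) / 2)))) :=
          sum_congr rfl fun j hj => by rw [prod_sq_mul_signedChord_sq_eq (hψ j hj)]; ring
      _ = 0 := by rw [sum_sub_distrib, ← mul_sum, ← mul_sum, h, hcot]; ring
  exact hpos.ne' hzero

theorem HasDerivAt.fun_finsetProd_mul_sum {𝕜 : Type*} [NontriviallyNormedField 𝕜] {s : Finset ι}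
    {f : ι → 𝕜 → 𝕜} {L : ι → 𝕜} {t : 𝕜} (hf : ∀ i ∈ s, HasDerivAt (f i) (f i t * L i) t) :
    HasDerivAt (fun u => ∏ i ∈ s, f i u) ((∏ i ∈ s, f i t) * ∑ i ∈ s, L i) t := by
  classical
  refine (HasDerivAt.fun_finsetProd hf).congr_deriv ?_
  rw [mul_sum]
  refine sum_congr rfl fun i hi => ?_
  rw [smul_eq_mul, ← mul_prod_erase s _ hi]
  ring

theorem hasDerivAt_signedChord {a x : ℝ → ℝ} {a' x' t : ℝ} (ha : HasDerivAt a a' t)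
    (hx : HasDerivAt x x' t) (h : Real.sin ((a t - x t) / 2) ≠ 0) :
    HasDerivAt (fun u => signedChord (a u) (x u))
      (signedChord (a t) (x t) * (Real.cot ((a t - x t) / 2) * ((a' - x') / 2))) t := by
  refine ((((ha.sub hx).div_const 2).sin).const_mul 2).congr_deriv ?_
  rw [signedChord, Real.cot_eq_cos_div_sin, Pi.sub_apply]
  field_simp

theorem hasDerivAt_popucWeight {s : Finset ι} {φ : ι → ℝ → ℝ} {ψ x : ℝ → ℝ} {φ' : ι → ℝ}
    {ψ' x' t : ℝ} (θ₀ : ℝ) (hφ : ∀ l ∈ s, HasDerivAt (φ l) (φ' l) t) (hψ : HasDerivAt ψ ψ' t)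
    (hx : HasDerivAt x x' t) (hφx : ∀ l ∈ s, Real.sin ((φ l t - x t) / 2) ≠ 0)
    (hθ₀x : Real.sin ((θ₀ - x t) / 2) ≠ 0) (hψx : Real.sin ((ψ t - x t) / 2) ≠ 0) :
    HasDerivAt (fun u => popucWeight s (φ · u) θ₀ (ψ u) (x u))
      (popucWeight s (φ · t) θ₀ (ψ t) (x t) *
        (∑ l ∈ s, Real.cot ((φ l t - x t) / 2) * φ' l + Real.cot ((ψ t - x t) / 2) * ψ' / 2 -
          popucCotSum s (φ · t) θ₀ (ψ t) (x t) * x')) t := by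
  have hprod : HasDerivAt (fun u => ∏ l ∈ s, signedChord (φ l u) (x u) ^ 2)
      ((∏ l ∈ s, signedChord (φ l t) (x t) ^ 2) *
        ∑ l ∈ s, Real.cot ((φ l t - x t) / 2) * (φ' l - x')) t := by
    refine HasDerivAt.fun_finsetProd_mul_sum fun l hl => ?_
    refine ((hasDerivAt_signedChord (hφ l hl) hx (hφx l hl)).pow 2).congr_deriv ?_
    ring
  have hθ₀ := hasDerivAt_signedChord (hasDerivAt_const t θ₀) hx hθ₀x
  have hψ := hasDerivAt_signedChord hψ hx hψx
  refine (hprod.mul (hθ₀.mul hψ)).congr_deriv ?_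
  simp only [popucWeight, popucCotSum, Pi.mul_apply, mul_sub, sum_sub_distrib, ← sum_mul]
  ring

theorem hasDerivAt_mul_popucWeight {s : Finset ι} {γ ψ x : ℝ → ℝ} {φ : ι → ℝ → ℝ} {φ' : ι → ℝ}
    {ψ' x' t : ℝ} (θ₀ : ℝ)
    (hγ : HasDerivAt γ (γ t * (popucCotSum s (φ · t) θ₀ (ψ t) (x t) * x')) t)
    (hφ : ∀ l ∈ s, HasDerivAt (φ l) (φ' l) t) (hψ : HasDerivAt ψ ψ' t)
    (hx : HasDerivAt x x' t) (hφx : ∀ l ∈ s, Real.sin ((φ l t - x t) / 2) ≠ 0)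
    (hθ₀x : Real.sin ((θ₀ - x t) / 2) ≠ 0) (hψx : Real.sin ((ψ t - x t) / 2) ≠ 0) :
    HasDerivAt (fun u => γ u * popucWeight s (φ · u) θ₀ (ψ u) (x u))
      (γ t * popucWeight s (φ · t) θ₀ (ψ t) (x t) *
        (∑ l ∈ s, Real.cot ((φ l t - x t) / 2) * φ' l + Real.cot ((ψ t - x t) / 2) * ψ' / 2))
      t := by
  refine (hγ.mul (hasDerivAt_popucWeight θ₀ hφ hψ hx hφx hθ₀x hψx)).congr_deriv ?_
  ring

theorem moving_zero_deriv_eq_zero {J : Finset κ} {s : Finset ι}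
    {γ ω : κ → ℝ → ℝ} {φ : ι → ℝ → ℝ} {ψ : ℝ → ℝ} {ω' : κ → ℝ} {φ' : ι → ℝ} {θ₀ ψ' t : ℝ}
    (hJ : J.Nonempty)
    (hpara : ∀ᶠ u in 𝓝 t, IsParaorthogonal J (γ · u) (ω · u) s (φ · u) θ₀ (ψ u))
    (hγpos : ∀ j ∈ J, 0 < γ j t)
    (hγ : ∀ j ∈ J, HasDerivAt (γ j) (γ j t * (popucCotSum s (φ · t) θ₀ (ψ t) (ω j t) * ω' j)) t)
    (hω : ∀ j ∈ J, HasDerivAt (ω j) (ω' j) t) (hφ : ∀ l ∈ s, HasDerivAt (φ l) (φ' l) t)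
    (hψ : HasDerivAt ψ ψ' t) (hφω : ∀ j ∈ J, ∀ l ∈ s, Real.sin ((φ l t - ω j t) / 2) ≠ 0)
    (hθ₀ω : ∀ j ∈ J, Real.sin ((θ₀ - ω j t) / 2) ≠ 0)
    (hψω : ∀ j ∈ J, Real.sin ((ψ t - ω j t) / 2) ≠ 0) :
    ψ' = 0 := by
  set w : κ → ℝ → ℝ := fun j u => popucWeight s (φ · u) θ₀ (ψ u) (ω j u)
  have hpara₀ := hpara.self_of_nhds
  have hderiv := HasDerivAt.fun_sum fun j hj =>
    hasDerivAt_mul_popucWeight θ₀ (hγ j hj) hφ hψ (hω j hj) (hφω j hj) (hθ₀ω j hj) (hψω j hj)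
  have hconst : HasDerivAt (fun u => ∑ j ∈ J, γ j u * w j u) 0 t :=
    (hasDerivAt_const t 0).congr_of_eventuallyEq
      (hpara.mono fun u hu => hu.sum_mul_popucWeight_eq_zero)
  have hzero := hderiv.unique hconst
  have hsplit : ∑ j ∈ J, γ j t * w j t *
      (∑ l ∈ s, Real.cot ((φ l t - ω j t) / 2) * φ' l + Real.cot ((ψ t - ω j t) / 2) * ψ' / 2) =
      ∑ l ∈ s, φ' l * ∑ j ∈ J, γ j t * (w j t * Real.cot ((φ l t - ω j t) / 2)) +
        ψ' / 2 * ∑ j ∈ J, γ j t * (w j t * Real.cot ((ψ t - ω j t) / 2)) := by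
    simp only [mul_add, sum_add_distrib, mul_sum]
    rw [sum_comm]
    congr 1 <;> refine sum_congr rfl fun _ _ => ?_
    · exact sum_congr rfl fun _ _ => by ring
    · ring
  rw [hsplit, sum_eq_zero fun l hl => by rw [hpara₀.sum_mul_popucWeight_mul_cot_eq_zero hl,
    mul_zero], zero_add] at hzero
  have hD := sum_mul_popucWeight_mul_cot_ne_zero hJ hγpos hφω hθ₀ω hψω
    hpara₀.sum_mul_popucWeight_eq_zero
  linarith [(mul_eq_zero.mp hzero).resolve_right hD]

theorem discrete_popuc_zero_does_not_move_general
    -- the open interval `I = (a, b)`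
    (a b : ℝ)
    -- the masses `γ_j` and mass points `ω_j`, `j = 0, …, N`
    (N : ℕ) (γ ω : ℕ → ℝ → ℝ)
    (hγpos : ∀ j ≤ N, ∀ t ∈ Set.Ioo a b, 0 < γ j t)
    (hγdiff : ∀ j ≤ N, ∀ t ∈ Set.Ioo a b, DifferentiableAt ℝ (γ j) t)
    (hωdiff : ∀ j ≤ N, ∀ t ∈ Set.Ioo a b, DifferentiableAt ℝ (ω j) t)
    -- the zeros `e^{iφ_k(t)}`, `k = 1, …, n`, of the POPUC `P(·; t)`
    (n : ℕ) (hn : 2 ≤ n) (θ₀ : ℝ) (φ : ℕ → ℝ → ℝ)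
    (hφdiff : ∀ k ∈ Finset.Icc 1 n, ∀ t ∈ Set.Ioo a b, DifferentiableAt ℝ (φ k) t)
    (hfix : ∀ t ∈ Set.Ioo a b, φ (n - 1) t = θ₀)
    (P : ℂ → ℝ → ℂ)
    (hP : ∀ z t, P z t = ∏ k ∈ Finset.Icc 1 n, (z - Complex.exp (φ k t * Complex.I)))
    (hdistinct : ∀ t ∈ Set.Ioo a b, ∀ j ∈ Finset.Icc 1 n, ∀ k ∈ Finset.Icc 1 n, j ≠ k →
      Complex.exp (φ j t * Complex.I) ≠ Complex.exp (φ k t * Complex.I))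
    (hsep : ∀ t ∈ Set.Ioo a b, ∀ j ≤ N, ∀ k ∈ Finset.Icc 1 n,
      Complex.exp (ω j t * Complex.I) ≠ Complex.exp (φ k t * Complex.I))
    -- paraorthogonality with respect to the measure `Σ_j γ_j(t) δ(θ − ω_j(t))`
    (hpara : ∀ t ∈ Set.Ioo a b, ∀ g : Polynomial ℂ,
      g.natDegree ≤ n - 1 → g.eval 0 = 0 →
      ∑ j ∈ Finset.range (N + 1), (γ j t : ℂ) *
        P (Complex.exp (ω j t * Complex.I)) t *
        (starRingEnd ℂ) (g.eval (Complex.exp (ω j t * Complex.I))) = 0)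
    -- the functions `s`, `S` and `W_j`
    (s : ℝ → ℝ → ℝ)
    (hs : ∀ θ t, s θ t = Real.sin ((φ n t - θ₀) / 2) /
      (2 * Real.sin ((φ n t - θ) / 2) * Real.sin ((θ₀ - θ) / 2)))
    (S : ℝ → ℝ → ℝ)
    (hS : ∀ θ t, S θ t = (∑ k ∈ Finset.Icc 1 (n - 2), Real.cot ((φ k t - θ) / 2)) +
      (1 / 2) * Real.cot ((θ₀ - θ) / 2) + (1 / 2) * Real.cot ((φ n t - θ) / 2))
    (W : ℕ → ℝ → ℝ)
    (hW : ∀ j t, W j t = s (ω j t) t * deriv (γ j) t -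
      γ j t * s (ω j t) t * S (ω j t) t * deriv (ω j) t)
    -- hypothesis: all the `W_j` vanish identically on `I`
    (hWzero : ∀ t ∈ Set.Ioo a b, ∀ j ≤ N, W j t = 0)
    -- conclusion
    : ∀ t ∈ Set.Ioo a b, deriv (φ n) t = 0 := by
  obtain ⟨m, rfl⟩ : ∃ m, n = m + 2 := ⟨n - 2, by omega⟩
  intro t ht
  have hθ₀ : ∀ u ∈ Set.Ioo a b, φ (m + 1) u = θ₀ := hfix
  have hP' : ∀ u ∈ Set.Ioo a b, ∀ z, P z u = (∏ l ∈ Icc 1 m, (z - exp (φ l u * I))) *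
      (z - exp (θ₀ * I)) * (z - exp (φ (m + 2) u * I)) := fun u hu z => by
    rw [hP, prod_Icc_succ_top (by omega), prod_Icc_succ_top (by omega), hθ₀ u hu]
  have hsin : ∀ j ≤ N, ∀ k ∈ Icc 1 (m + 2), Real.sin ((φ k t - ω j t) / 2) ≠ 0 :=
    fun j hj k hk => sin_half_sub_ne_zero (hsep t ht j hj k hk).symm
  have hsinθ₀ : ∀ j ≤ N, Real.sin ((θ₀ - ω j t) / 2) ≠ 0 := fun j hj => by
    simpa [hθ₀ t ht] using hsin j hj (m + 1) (by simp)
  have hγ' : ∀ j ≤ N, HasDerivAt (γ j) (γ j t *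
      (popucCotSum (Icc 1 m) (φ · t) θ₀ (φ (m + 2) t) (ω j t) * deriv (ω j) t)) t := by
    intro j hj
    have hsne : s (ω j t) t ≠ 0 := by
      rw [hs]
      refine div_ne_zero ?_ (mul_ne_zero (mul_ne_zero two_ne_zero (hsin j hj _ (by simp)))
        (hsinθ₀ j hj))
      simpa [hθ₀ t ht] using sin_half_sub_ne_zero (hdistinct t ht (m + 2) (by simp) (m + 1)
        (by simp) (by omega))
    have hW0 : s (ω j t) t * (deriv (γ j) t - γ j t * S (ω j t) t * deriv (ω j) t) = 0 := by
      linear_combination (hW j t).symm.trans (hWzero t ht j hj)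
    refine (hγdiff j hj t ht).hasDerivAt.congr_deriv ?_
    rw [sub_eq_zero.mp ((mul_eq_zero.mp hW0).resolve_left hsne), hS, popucCotSum,
      Nat.add_sub_cancel]
    ring
  have hpara' : ∀ᶠ u in 𝓝 t, IsParaorthogonal (range (N + 1)) (γ · u) (ω · u) (Icc 1 m) (φ · u)
      θ₀ (φ (m + 2) u) := by
    filter_upwards [Ioo_mem_nhds ht.1 ht.2] with u hu g hg h0
    simpa only [hP' u hu] using hpara u hu g (by simpa using hg) h0
  have hJ : ∀ {j}, j ∈ range (N + 1) → j ≤ N := mem_range_succ_iff.mp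
  have hIcc : ∀ {k}, k ∈ Icc 1 m → k ∈ Icc 1 (m + 2) := fun hk => by simp at hk ⊢; omega
  exact moving_zero_deriv_eq_zero nonempty_range_add_one hpara'
    (fun j hj => hγpos j (hJ hj) t ht) (fun j hj => hγ' j (hJ hj))
    (fun j hj => (hωdiff j (hJ hj) t ht).hasDerivAt)
    (fun l hl => (hφdiff l (hIcc hl) t ht).hasDerivAt) (hφdiff (m + 2) (by simp) t ht).hasDerivAt
    (fun j hj l hl => hsin j (hJ hj) l (hIcc hl)) (fun j hj => hsinθ₀ j (hJ hj))
    (fun j hj => hsin j (hJ hj) (m + 2) (by simp))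

/-- Theorem (discrete measure, constancy): under the discrete paraorthogonality setup
with fixed zero `e^{iθ₀}`, if `W_j(t) = 0` for all `t ∈ I` and all `j`, then
`φ_n'(t) = 0` for all `t ∈ I`, i.e. the zero `ζ(t) = e^{iφ_n(t)}` does not move as `t`
increases on `I`. -/
theorem discrete_popuc_zero_does_not_move
    -- the open interval `I = (a, b)`
    (a b : ℝ) (hab : a < b)
    -- the masses `γ_j` and mass points `ω_j`, `j = 0, …, N`
    (N : ℕ) (γ ω : ℕ → ℝ → ℝ)
    (hγpos : ∀ j ≤ N, ∀ t ∈ Set.Ioo a b, 0 < γ j t)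
    (hγdiff : ∀ j ≤ N, ∀ t ∈ Set.Ioo a b, DifferentiableAt ℝ (γ j) t)
    (hωdiff : ∀ j ≤ N, ∀ t ∈ Set.Ioo a b, DifferentiableAt ℝ (ω j) t)
    -- the zeros `e^{iφ_k(t)}`, `k = 1, …, n`, of the POPUC `P(·; t)`
    (n : ℕ) (hn : 2 ≤ n) (θ₀ : ℝ) (φ : ℕ → ℝ → ℝ)
    (hφdiff : ∀ k ∈ Finset.Icc 1 n, ∀ t ∈ Set.Ioo a b, DifferentiableAt ℝ (φ k) t)
    (hfix : ∀ t ∈ Set.Ioo a b, φ (n - 1) t = θ₀)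
    (P : ℂ → ℝ → ℂ)
    (hP : ∀ z t, P z t = ∏ k ∈ Finset.Icc 1 n, (z - Complex.exp (φ k t * Complex.I)))
    (hdistinct : ∀ t ∈ Set.Ioo a b, ∀ j ∈ Finset.Icc 1 n, ∀ k ∈ Finset.Icc 1 n, j ≠ k →
      Complex.exp (φ j t * Complex.I) ≠ Complex.exp (φ k t * Complex.I))
    (hsep : ∀ t ∈ Set.Ioo a b, ∀ j ≤ N, ∀ k ∈ Finset.Icc 1 n,
      Complex.exp (ω j t * Complex.I) ≠ Complex.exp (φ k t * Complex.I))
    -- paraorthogonality with respect to the measure `Σ_j γ_j(t) δ(θ − ω_j(t))`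
    (hpara : ∀ t ∈ Set.Ioo a b, ∀ g : Polynomial ℂ,
      g.natDegree ≤ n - 1 → g.eval 0 = 0 →
      ∑ j ∈ Finset.range (N + 1), (γ j t : ℂ) *
        P (Complex.exp (ω j t * Complex.I)) t *
        (starRingEnd ℂ) (g.eval (Complex.exp (ω j t * Complex.I))) = 0)
    -- the functions `s`, `S` and `W_j`
    (s : ℝ → ℝ → ℝ)
    (hs : ∀ θ t, s θ t = Real.sin ((φ n t - θ₀) / 2) /
      (2 * Real.sin ((φ n t - θ) / 2) * Real.sin ((θ₀ - θ) / 2)))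
    (S : ℝ → ℝ → ℝ)
    (hS : ∀ θ t, S θ t = (∑ k ∈ Finset.Icc 1 (n - 2), Real.cot ((φ k t - θ) / 2)) +
      (1 / 2) * Real.cot ((θ₀ - θ) / 2) + (1 / 2) * Real.cot ((φ n t - θ) / 2))
    (W : ℕ → ℝ → ℝ)
    (hW : ∀ j t, W j t = s (ω j t) t * deriv (γ j) t -
      γ j t * s (ω j t) t * S (ω j t) t * deriv (ω j) t)
    -- hypothesis: all the `W_j` vanish identically on `I`
    (hWzero : ∀ t ∈ Set.Ioo a b, ∀ j ≤ N, W j t = 0)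
    -- conclusion
    : ∀ t ∈ Set.Ioo a b, deriv (φ n) t = 0 :=
  discrete_popuc_zero_does_not_move_general a b N γ ω hγpos hγdiff hωdiff n hn θ₀ φ hφdiff hfix P hP
    hdistinct hsep hpara s hs S hS W hW hWzero
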